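/- For every integer q ≥ 1: every finite connected simple graph G with ind-match(G) = 1, min-match(G) = q and match(G) = 2q − 1 has at least (2q choose 2) edges, and there exists a finite connected simple graph G with ind-match(G) = 1, min-match(G) = q, match(G) = 2q − 1 and exactly (2q choose 2) edges. (That is, the minimum number of edges of such graphs is (2q choose 2).) -/

import Mathlib

variable {V : Type*}

/-- A matching of `G`: a set of edges of `G` that are pairwise disjoint. -/
def IsMatchingSet (G : SimpleGraph V) (M : Set (Sym2 V)) : Prop :=
  (∀ e ∈ M, e ∈ G.edgeSet) ∧
    ∀ e ∈ M, ∀ f ∈ M, e ≠ f → ∀ v : V, v ∈ e → v ∉ f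

/-- A maximal matching of `G`: a matching `M` such that `M ∪ {e}` is not a matching
for every edge `e` of `G` not in `M`. -/
def IsMaximalMatchingSet (G : SimpleGraph V) (M : Set (Sym2 V)) : Prop :=
  IsMatchingSet G M ∧
    ∀ e ∈ G.edgeSet, e ∉ M → ¬ IsMatchingSet G (insert e M)

/-- An induced matching of `G`: a matching `M` such that no edge of `G` meets
two distinct edges of `M`. -/
def IsInducedMatchingSet (G : SimpleGraph V) (M : Set (Sym2 V)) : Prop :=
  IsMatchingSet G M ∧
    ∀ e ∈ M, ∀ f ∈ M, e ≠ f → ∀ g ∈ G.edgeSet,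
      ¬ ((∃ v : V, v ∈ g ∧ v ∈ e) ∧ (∃ v : V, v ∈ g ∧ v ∈ f))

/-- The matching number of `G`: the maximum size of a matching. -/
noncomputable def matchNum (G : SimpleGraph V) : ℕ :=
  sSup {n | ∃ M : Set (Sym2 V), IsMatchingSet G M ∧ M.ncard = n}

/-- The minimum matching number of `G`: the minimum size of a maximal matching. -/
noncomputable def minMatchNum (G : SimpleGraph V) : ℕ :=
  sInf {n | ∃ M : Set (Sym2 V), IsMaximalMatchingSet G M ∧ M.ncard = n}

/-- The induced matching number of `G`: the maximum size of an induced matching. -/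
noncomputable def indMatchNum (G : SimpleGraph V) : ℕ :=
  sSup {n | ∃ M : Set (Sym2 V), IsInducedMatchingSet G M ∧ M.ncard = n}

/-! Lower bound: let `M` be a maximum matching, so `|M| = 2q - 1`. As no induced matching has
two edges, any two edges of `M` are joined by an edge of `G`, and such an edge meets no third
edge of `M`; so the edges of `M` and one joining edge per pair of them are pairwise distinct,
which gives `|M| + (|M| choose 2) = (2q choose 2)` edges.

Extremal graph: the corona `K_{2q-1} ∘ K_1`. Every edge has a clique vertex, so induced matchings
are single edges; the pendant edges form a perfect matching; a maximal matching covers every clique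
vertex (otherwise the pendant edge there could be added), so it has at least `q` edges, and `q - 1`
clique edges plus one pendant edge form a maximal matching. -/

namespace Sym2

variable {α β : Type*} {f : α → β}

theorem apply_mem_map_iff (hf : Function.Injective f) {a : α} {z : Sym2 α} :
    f a ∈ Sym2.map f z ↔ a ∈ z := by
  simp [hf.eq_iff]

theorem map_surjective (hf : Function.Surjective f) : Function.Surjective (Sym2.map f) := by
  intro z
  induction z using Sym2.ind with
  | _ a b =>
  obtain ⟨x, rfl⟩ := hf a
  obtain ⟨y, rfl⟩ := hf b
  exact ⟨s(x, y), rfl⟩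

end Sym2

section Matchings

variable {G : SimpleGraph V} {M N : Set (Sym2 V)} {e f : Sym2 V}

theorem isMatchingSet_empty (G : SimpleGraph V) : IsMatchingSet G ∅ := by
  simp [IsMatchingSet]

theorem IsMatchingSet.mono (hM : IsMatchingSet G M) (hNM : N ⊆ M) : IsMatchingSet G N :=
  ⟨fun e he => hM.1 e (hNM he), fun e he f hf => hM.2 e (hNM he) f (hNM hf)⟩

theorem IsMatchingSet.eq_of_mem (hM : IsMatchingSet G M) (he : e ∈ M) (hf : f ∈ M) {v : V}
    (hve : v ∈ e) (hvf : v ∈ f) : e = f := by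
  by_contra hef
  exact hM.2 e he f hf hef v hve hvf

theorem IsMatchingSet.eq_or_eq_of_meets (hM : IsMatchingSet G M) {a b d g : Sym2 V}
    (ha : a ∈ M) (hb : b ∈ M) (hd : d ∈ M) (hab : a ≠ b) (hga : ∃ v, v ∈ g ∧ v ∈ a)
    (hgb : ∃ v, v ∈ g ∧ v ∈ b) (hgd : ∃ v, v ∈ g ∧ v ∈ d) : d = a ∨ d = b := by
  obtain ⟨x, hxg, hxa⟩ := hga
  obtain ⟨y, hyg, hyb⟩ := hgb
  obtain ⟨z, hzg, hzd⟩ := hgd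
  have hxy : x ≠ y := by
    rintro rfl
    exact hab (hM.eq_of_mem ha hb hxa hyb)
  rw [(Sym2.mem_and_mem_iff hxy).mp ⟨hxg, hyg⟩, Sym2.mem_iff] at hzg
  rcases hzg with rfl | rfl
  · exact .inl (hM.eq_of_mem hd ha hzd hxa)
  · exact .inr (hM.eq_of_mem hd hb hzd hyb)

theorem IsMatchingSet.ncard_verts [Finite V] (hM : IsMatchingSet G M) :
    {v | ∃ e ∈ M, v ∈ e}.ncard = 2 * M.ncard := by
  classical
  have hMfin : M.Finite := Set.toFinite M
  have hverts : {v | ∃ e ∈ M, v ∈ e} = ↑(hMfin.toFinset.biUnion Sym2.toFinset) := by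
    ext v
    simp
  rw [hverts, Set.ncard_coe_finset, Finset.card_biUnion, Set.ncard_eq_toFinset_card M hMfin,
    mul_comm, ← smul_eq_mul, ← Finset.sum_const]
  · refine Finset.sum_congr rfl fun e he => ?_
    exact Sym2.card_toFinset_of_not_isDiag e
      (G.not_isDiag_of_mem_edgeSet (hM.1 e (hMfin.mem_toFinset.mp he)))
  · intro e he f hf hef
    refine Finset.disjoint_left.mpr fun v hve hvf => ?_
    simp only [Finset.mem_coe, Set.Finite.mem_toFinset] at he hf
    exact hM.2 e he f hf hef v (Sym2.mem_toFinset.mp hve) (Sym2.mem_toFinset.mp hvf)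

theorem IsMatchingSet.two_mul_ncard_le [Finite V] (hM : IsMatchingSet G M) :
    2 * M.ncard ≤ Nat.card V :=
  hM.ncard_verts ▸ Set.ncard_le_card _

theorem IsMaximalMatchingSet.exists_meets (hM : IsMaximalMatchingSet G M)
    (he : e ∈ G.edgeSet) : ∃ v ∈ e, ∃ f ∈ M, v ∈ f := by
  by_contra! hfree
  have heM : e ∉ M := fun heM => hfree _ (Sym2.out_fst_mem e) e heM (Sym2.out_fst_mem e)
  refine hM.2 e he heM ⟨?_, ?_⟩
  · rintro f (rfl | hf)
    exacts [he, hM.1.1 f hf]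
  · rintro f (rfl | hf) g (rfl | hg) hfg v hvf hvg
    exacts [hfg rfl, hfree v hvf g hg hvg, hfree v hvg f hf hvf, hM.1.2 f hf g hg hfg v hvf hvg]

theorem IsMatchingSet.isMaximalMatchingSet (hM : IsMatchingSet G M)
    (hcover : ∀ e ∈ G.edgeSet, ∃ v ∈ e, ∃ f ∈ M, v ∈ f) :
    IsMaximalMatchingSet G M := by
  refine ⟨hM, fun e he heM hM' => ?_⟩
  obtain ⟨v, hve, f, hf, hvf⟩ := hcover e he
  exact hM'.2 e (Set.mem_insert e M) f (Set.mem_insert_of_mem e hf)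
    (ne_of_mem_of_not_mem hf heM).symm v hve hvf

end Matchings

section Numbers

variable {G : SimpleGraph V} {M : Set (Sym2 V)}

theorem bddAbove_setOf_ncard [Finite V] (P : Set (Sym2 V) → Prop) :
    BddAbove {n | ∃ M : Set (Sym2 V), P M ∧ M.ncard = n} :=
  bddAbove_def.mpr ⟨Nat.card (Sym2 V), by rintro _ ⟨M, -, rfl⟩; exact Set.ncard_le_card M⟩

theorem exists_isMatchingSet_ncard_eq_matchNum [Finite V] (G : SimpleGraph V) :
    ∃ M, IsMatchingSet G M ∧ M.ncard = matchNum G :=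
  Nat.sSup_mem (s := {n | ∃ M : Set (Sym2 V), IsMatchingSet G M ∧ M.ncard = n})
    ⟨0, ∅, isMatchingSet_empty G, Set.ncard_empty _⟩ (bddAbove_setOf_ncard _)

theorem IsMatchingSet.ncard_le_matchNum [Finite V] (hM : IsMatchingSet G M) :
    M.ncard ≤ matchNum G :=
  le_csSup (bddAbove_setOf_ncard _) ⟨M, hM, rfl⟩

theorem IsInducedMatchingSet.ncard_le_indMatchNum [Finite V] (hM : IsInducedMatchingSet G M) :
    M.ncard ≤ indMatchNum G :=
  le_csSup (bddAbove_setOf_ncard _) ⟨M, hM, rfl⟩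

theorem IsMaximalMatchingSet.minMatchNum_le (hM : IsMaximalMatchingSet G M) :
    minMatchNum G ≤ M.ncard :=
  Nat.sInf_le ⟨M, hM, rfl⟩

theorem indMatchNum_le_one_iff [Finite V] : indMatchNum G ≤ 1 ↔
    ∀ e f, IsMatchingSet G {e, f} → e ≠ f →
      ∃ g ∈ G.edgeSet, (∃ v, v ∈ g ∧ v ∈ e) ∧ (∃ v, v ∈ g ∧ v ∈ f) := by
  constructor
  · intro hind e f hM hef
    by_contra hfar
    have hind' : IsInducedMatchingSet G {e, f} := by
      refine ⟨hM, ?_⟩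
      rintro a (rfl | rfl) b (rfl | rfl) hab g hg ⟨hga, hgb⟩
      exacts [hab rfl, hfar ⟨g, hg, hga, hgb⟩, hfar ⟨g, hg, hgb, hga⟩, hab rfl]
    have := hind'.ncard_le_indMatchNum
    rw [Set.ncard_pair hef] at this
    omega
  · intro hconn
    refine csSup_le ⟨0, ∅, ⟨isMatchingSet_empty G, by simp⟩, Set.ncard_empty _⟩ ?_
    rintro _ ⟨M, hM, rfl⟩
    refine (Set.ncard_le_one_iff (Set.toFinite M)).mpr fun {e f} he hf => ?_
    by_contra hef
    obtain ⟨g, hg, hge, hgf⟩ :=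
      hconn e f (hM.1.mono (Set.insert_subset he (Set.singleton_subset_iff.mpr hf))) hef
    exact hM.2 e he f hf hef g hg ⟨hge, hgf⟩

theorem one_le_indMatchNum [Finite V] {e : Sym2 V} (he : e ∈ G.edgeSet) :
    1 ≤ indMatchNum G := by
  have hsingle : IsInducedMatchingSet G {e} := by
    refine ⟨⟨by simpa using he, ?_⟩, ?_⟩ <;>
    · rintro a rfl b rfl hab
      exact (hab rfl).elim
  simpa using hsingle.ncard_le_indMatchNum

end Numbers

section LowerBound

variable {G : SimpleGraph V} {M : Set (Sym2 V)}

theorem exists_edge_meets_iff_mem [Finite V] (hind : indMatchNum G ≤ 1)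
    (hM : IsMatchingSet G M) (s : Sym2 M) :
    ∃ g ∈ G.edgeSet, ∀ d : M, (∃ v, v ∈ g ∧ v ∈ (d : Sym2 V)) ↔ d ∈ s := by
  induction s using Sym2.ind with
  | _ a b =>
  by_cases hab : a = b
  · subst hab
    refine ⟨a, hM.1 a a.2, fun d => ?_⟩
    rw [Sym2.mem_iff, or_self]
    refine ⟨fun ⟨v, hva, hvd⟩ => Subtype.ext (hM.eq_of_mem d.2 a.2 hvd hva), ?_⟩
    rintro rfl
    exact ⟨_, Sym2.out_fst_mem _, Sym2.out_fst_mem _⟩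
  · have hab' : (a : Sym2 V) ≠ b := Subtype.coe_injective.ne hab
    obtain ⟨g, hg, hga, hgb⟩ := indMatchNum_le_one_iff.mp hind a b
      (hM.mono (Set.insert_subset a.2 (Set.singleton_subset_iff.mpr b.2))) hab'
    refine ⟨g, hg, fun d => ⟨fun hgd => ?_, ?_⟩⟩
    · rw [Sym2.mem_iff, Subtype.ext_iff, Subtype.ext_iff]
      exact hM.eq_or_eq_of_meets a.2 b.2 d.2 hab' hga hgb hgd
    · rw [Sym2.mem_iff]
      rintro (rfl | rfl)
      exacts [hga, hgb]

theorem choose_ncard_add_one_two_le_ncard_edgeSet [Finite V] (hind : indMatchNum G ≤ 1)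
    (hM : IsMatchingSet G M) : (M.ncard + 1).choose 2 ≤ G.edgeSet.ncard := by
  choose g hg using exists_edge_meets_iff_mem hind hM
  have hinj : Function.Injective fun s : Sym2 M => (⟨g s, (hg s).1⟩ : G.edgeSet) := by
    intro s t hst
    refine Sym2.ext fun d => ?_
    rw [← (hg s).2 d, ← (hg t).2 d, Subtype.mk.inj hst]
  have := Fintype.ofFinite M
  have hcard := Nat.card_le_card_of_injective _ hinj
  rwa [Nat.card_eq_fintype_card, Sym2.card, ← Nat.card_eq_fintype_card, Nat.card_coe_set_eq,
    Nat.card_coe_set_eq] at hcard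

end LowerBound

namespace SimpleGraph.Iso

variable {W : Type*} {G : SimpleGraph V} {H : SimpleGraph W} {M : Set (Sym2 V)}

theorem isMatchingSet_image_iff (φ : G ≃g H) :
    IsMatchingSet H (Sym2.map φ '' M) ↔ IsMatchingSet G M := by
  simp only [IsMatchingSet, Set.forall_mem_image, φ.map_mem_edgeSet_iff, φ.surjective.forall,
    Sym2.apply_mem_map_iff φ.injective, (Sym2.map.injective φ.injective).ne_iff]

theorem isMaximalMatchingSet_image_iff (φ : G ≃g H) :
    IsMaximalMatchingSet H (Sym2.map φ '' M) ↔ IsMaximalMatchingSet G M := by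
  simp only [IsMaximalMatchingSet, φ.isMatchingSet_image_iff,
    (Sym2.map_surjective φ.surjective).forall, φ.map_mem_edgeSet_iff,
    (Sym2.map.injective φ.injective).mem_set_image, ← Set.image_insert_eq]

theorem isInducedMatchingSet_image_iff (φ : G ≃g H) :
    IsInducedMatchingSet H (Sym2.map φ '' M) ↔ IsInducedMatchingSet G M := by
  simp only [IsInducedMatchingSet, φ.isMatchingSet_image_iff, Set.forall_mem_image,
    (Sym2.map_surjective φ.surjective).forall, φ.map_mem_edgeSet_iff, φ.surjective.exists,
    Sym2.apply_mem_map_iff φ.injective, (Sym2.map.injective φ.injective).ne_iff]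

theorem setOf_ncard_eq (φ : G ≃g H) {P : Set (Sym2 V) → Prop} {Q : Set (Sym2 W) → Prop}
    (hPQ : ∀ M, Q (Sym2.map φ '' M) ↔ P M) :
    {n | ∃ M, Q M ∧ M.ncard = n} = {n | ∃ M, P M ∧ M.ncard = n} := by
  ext n
  simp only [Set.mem_ofPred_eq,
    (Set.image_surjective.mpr (Sym2.map_surjective φ.surjective)).exists, hPQ,
    Set.ncard_image_of_injective _ (Sym2.map.injective φ.injective)]

theorem matchNum_eq (φ : G ≃g H) : matchNum G = matchNum H := by
  rw [matchNum, matchNum, φ.setOf_ncard_eq fun _ => φ.isMatchingSet_image_iff]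

theorem minMatchNum_eq (φ : G ≃g H) : minMatchNum G = minMatchNum H := by
  rw [minMatchNum, minMatchNum, φ.setOf_ncard_eq fun _ => φ.isMaximalMatchingSet_image_iff]

theorem indMatchNum_eq (φ : G ≃g H) : indMatchNum G = indMatchNum H := by
  rw [indMatchNum, indMatchNum, φ.setOf_ncard_eq fun _ => φ.isInducedMatchingSet_image_iff]

theorem ncard_edgeSet_eq (φ : G ≃g H) : G.edgeSet.ncard = H.edgeSet.ncard := by
  rw [← Nat.card_coe_set_eq, ← Nat.card_coe_set_eq, Nat.card_congr φ.mapEdgeSet]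

end SimpleGraph.Iso

/-- The corona `K_W ∘ K_1`: a complete graph on the vertices `inl w`, with a pendant vertex
`inr w` attached to each `inl w`. -/
def completeCorona (W : Type*) : SimpleGraph (W ⊕ W) where
  Adj
    | .inl a, .inl b => a ≠ b
    | .inl a, .inr b => a = b
    | .inr a, .inl b => a = b
    | .inr _, .inr _ => False
  symm := ⟨by
    rintro (a | a) (b | b) h
    exacts [Ne.symm h, h.symm, h.symm, h]⟩
  loopless := ⟨by rintro (a | a) h; exacts [h rfl, h]⟩

namespace completeCorona

variable {W : Type*}

@[simp] theorem adj_inl_inl {a b : W} : (completeCorona W).Adj (.inl a) (.inl b) ↔ a ≠ b := .rfl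
@[simp] theorem adj_inl_inr {a b : W} : (completeCorona W).Adj (.inl a) (.inr b) ↔ a = b := .rfl
@[simp] theorem adj_inr_inl {a b : W} : (completeCorona W).Adj (.inr a) (.inl b) ↔ a = b := .rfl
@[simp] theorem not_adj_inr_inr {a b : W} : ¬ (completeCorona W).Adj (.inr a) (.inr b) := id

theorem connected [Nonempty W] : (completeCorona W).Connected := by
  obtain ⟨w₀⟩ := ‹Nonempty W›
  have hinl : ∀ a, (completeCorona W).Reachable (.inl w₀) (.inl a) := fun a => by
    rcases eq_or_ne w₀ a with rfl | h
    exacts [.rfl, SimpleGraph.Adj.reachable h]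
  refine (SimpleGraph.connected_iff_exists_forall_reachable _).mpr ⟨.inl w₀, ?_⟩
  rintro (a | a)
  exacts [hinl a, (hinl a).trans (SimpleGraph.Adj.reachable rfl)]

theorem exists_inl_mem {e : Sym2 (W ⊕ W)} (he : e ∈ (completeCorona W).edgeSet) :
    ∃ a, .inl a ∈ e := by
  induction e using Sym2.ind with
  | _ x y =>
  rcases x with a | a <;> rcases y with b | b
  exacts [⟨a, Sym2.mem_mk_left _ _⟩, ⟨a, Sym2.mem_mk_left _ _⟩,
    ⟨b, Sym2.mem_mk_right _ _⟩,
    (not_adj_inr_inr ((SimpleGraph.mem_edgeSet _).mp he)).elim]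

theorem inl_mem_of_inr_mem {e : Sym2 (W ⊕ W)} (he : e ∈ (completeCorona W).edgeSet) {a : W}
    (ha : .inr a ∈ e) : .inl a ∈ e := by
  induction e using Sym2.ind with
  | _ x y =>
  rcases x with b | b <;> rcases y with c | c <;> simp_all

theorem ncard_edgeSet [Fintype W] :
    (completeCorona W).edgeSet.ncard = (Fintype.card W + 1).choose 2 := by
  let fold : (completeCorona W).edgeSet → Sym2 W := fun e => Sym2.map (Sum.elim id id) e.1
  have hinj : fold.Injective := by
    rintro ⟨e, he⟩ ⟨f, hf⟩ (hef : Sym2.map _ e = Sym2.map _ f)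
    rw [Subtype.mk.injEq]
    induction e using Sym2.ind with
    | _ x y =>
    induction f using Sym2.ind with
    | _ x' y' =>
    rcases x with a | a <;> rcases y with b | b <;> rcases x' with c | c <;>
      rcases y' with d | d <;> aesop
  have hsurj : fold.Surjective := by
    intro e
    induction e using Sym2.ind with
    | _ a b =>
    rcases eq_or_ne a b with rfl | hab
    exacts [⟨⟨s(.inl a, .inr a), rfl⟩, rfl⟩, ⟨⟨s(.inl a, .inl b), hab⟩, rfl⟩]
  rw [← Nat.card_coe_set_eq, Nat.card_eq_of_bijective fold ⟨hinj, hsurj⟩,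
    Nat.card_eq_fintype_card, Sym2.card]

def pendantMatching (W : Type*) : Set (Sym2 (W ⊕ W)) := Set.range fun w => s(.inl w, .inr w)

theorem isMatchingSet_pendantMatching :
    IsMatchingSet (completeCorona W) (pendantMatching W) := by
  refine ⟨?_, ?_⟩
  · rintro _ ⟨w, rfl⟩
    exact adj_inl_inr.mpr rfl
  · rintro _ ⟨a, rfl⟩ _ ⟨b, rfl⟩ hab v
    rcases v with c | c <;> aesop

theorem ncard_pendantMatching [Fintype W] : (pendantMatching W).ncard = Fintype.card W := by
  rw [pendantMatching, ← Nat.card_coe_set_eq, Nat.card_range_of_injective,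
    Nat.card_eq_fintype_card]
  intro a b hab
  simpa using hab

theorem matchNum_eq [Fintype W] : matchNum (completeCorona W) = Fintype.card W := by
  refine le_antisymm ?_ (ncard_pendantMatching (W := W) ▸
    isMatchingSet_pendantMatching.ncard_le_matchNum)
  obtain ⟨M, hM, hcard⟩ := exists_isMatchingSet_ncard_eq_matchNum (completeCorona W)
  have := hM.two_mul_ncard_le
  rw [Nat.card_sum, Nat.card_eq_fintype_card] at this
  omega

theorem indMatchNum_eq [Finite W] [Nonempty W] : indMatchNum (completeCorona W) = 1 := by
  refine le_antisymm (indMatchNum_le_one_iff.mpr fun e f hM hef => ?_) ?_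
  · obtain ⟨a, hae⟩ := exists_inl_mem (hM.1 e (Set.mem_insert e _))
    obtain ⟨b, hbf⟩ := exists_inl_mem (hM.1 f (Set.mem_insert_of_mem e rfl))
    have hab : a ≠ b := by
      rintro rfl
      exact hef (hM.eq_of_mem (Set.mem_insert e _) (Set.mem_insert_of_mem e rfl) hae hbf)
    exact ⟨s(.inl a, .inl b), hab, ⟨_, Sym2.mem_mk_left _ _, hae⟩,
      ⟨_, Sym2.mem_mk_right _ _, hbf⟩⟩
  · obtain ⟨w⟩ := ‹Nonempty W›
    exact one_le_indMatchNum (e := s(.inl w, .inr w)) rfl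

theorem card_le_two_mul_ncard [Fintype W] {M : Set (Sym2 (W ⊕ W))}
    (hM : IsMaximalMatchingSet (completeCorona W) M) : Fintype.card W ≤ 2 * M.ncard := by
  have hcover : Set.range Sum.inl ⊆ {v | ∃ e ∈ M, v ∈ e} := by
    rintro _ ⟨a, rfl⟩
    obtain ⟨v, hv, f, hf, hvf⟩ := hM.exists_meets (e := s(Sum.inl a, Sum.inr a)) rfl
    rcases Sym2.mem_iff.mp hv with rfl | rfl
    exacts [⟨f, hf, hvf⟩, ⟨f, hf, inl_mem_of_inr_mem (hM.1.1 f hf) hvf⟩]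
  calc Fintype.card W = (Set.range (Sum.inl : W → W ⊕ W)).ncard := by
        rw [← Nat.card_coe_set_eq, Nat.card_range_of_injective Sum.inl_injective,
          Nat.card_eq_fintype_card]
    _ ≤ {v | ∃ e ∈ M, v ∈ e}.ncard := Set.ncard_le_ncard hcover
    _ = 2 * M.ncard := hM.1.ncard_verts

/-- `Option (Fin k × Bool)` has `2k + 1` elements: a near-perfect matching of the clique plus
one pendant edge. -/
def nearPerfectMatching (k : ℕ) :
    Set (Sym2 (Option (Fin k × Bool) ⊕ Option (Fin k × Bool))) :=
  insert s(.inl none, .inr none)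
    (Set.range fun i => s(.inl (some (i, false)), .inl (some (i, true))))

theorem isMaximalMatchingSet_nearPerfectMatching (k : ℕ) :
    IsMaximalMatchingSet (completeCorona _) (nearPerfectMatching k) := by
  refine IsMatchingSet.isMaximalMatchingSet ⟨?_, ?_⟩ fun e he => ?_
  · rintro _ (rfl | ⟨i, rfl⟩) <;> simp
  · rintro _ (rfl | ⟨i, rfl⟩) _ (rfl | ⟨j, rfl⟩) hne v <;>
      rcases v with (_ | ⟨c, _⟩) | _ <;> aesop
  · obtain ⟨a, ha⟩ := exists_inl_mem he
    refine ⟨_, ha, ?_⟩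
    rcases a with _ | ⟨i, _ | _⟩
    · exact ⟨_, Set.mem_insert _ _, Sym2.mem_mk_left _ _⟩
    · exact ⟨_, Set.mem_insert_of_mem _ ⟨i, rfl⟩, Sym2.mem_mk_left _ _⟩
    · exact ⟨_, Set.mem_insert_of_mem _ ⟨i, rfl⟩, Sym2.mem_mk_right _ _⟩

theorem ncard_nearPerfectMatching (k : ℕ) : (nearPerfectMatching k).ncard = k + 1 := by
  rw [nearPerfectMatching, Set.ncard_insert_of_notMem, ← Nat.card_coe_set_eq,
    Nat.card_range_of_injective, Nat.card_eq_fintype_card, Fintype.card_fin]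
  · intro i j hij
    simpa using hij
  · rintro ⟨i, hi⟩
    simp at hi

theorem minMatchNum_eq (k : ℕ) :
    minMatchNum (completeCorona (Option (Fin k × Bool))) = k + 1 := by
  have hwit := isMaximalMatchingSet_nearPerfectMatching k
  refine le_antisymm (ncard_nearPerfectMatching k ▸ hwit.minMatchNum_le) ?_
  refine le_csInf ⟨_, _, hwit, rfl⟩ ?_
  rintro _ ⟨M, hM, rfl⟩
  have := card_le_two_mul_ncard hM
  simp only [Fintype.card_option, Fintype.card_prod, Fintype.card_fin, Fintype.card_bool] at this
  omega

end completeCorona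

theorem stmt_7 (q : ℕ) (hq : 1 ≤ q) :
    (∀ (V : Type) [Fintype V] (G : SimpleGraph V), G.Connected →
      indMatchNum G = 1 → minMatchNum G = q → matchNum G = 2 * q - 1 →
      Nat.choose (2 * q) 2 ≤ G.edgeSet.ncard) ∧
    (∃ (n : ℕ) (G : SimpleGraph (Fin n)), G.Connected ∧
      indMatchNum G = 1 ∧ minMatchNum G = q ∧ matchNum G = 2 * q - 1 ∧
      G.edgeSet.ncard = Nat.choose (2 * q) 2) := by
  refine ⟨fun V _ G _ hind _ hmatch => ?_, ?_⟩
  · obtain ⟨M, hM, hcard⟩ := exists_isMatchingSet_ncard_eq_matchNum G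
    have := choose_ncard_add_one_two_le_ncard_edgeSet hind.le hM
    rwa [hcard, hmatch, Nat.sub_add_cancel (by omega)] at this
  · obtain ⟨k, rfl⟩ : ∃ k, q = k + 1 := ⟨q - 1, by omega⟩
    let W := Option (Fin k × Bool)
    have hW : Fintype.card W = 2 * (k + 1) - 1 := by
      simp only [W, Fintype.card_option, Fintype.card_prod, Fintype.card_fin, Fintype.card_bool]
      omega
    let φ := SimpleGraph.Iso.map (Fintype.equivFin (W ⊕ W)) (completeCorona W)
    refine ⟨_, _, φ.connected_iff.mp completeCorona.connected, ?_, ?_, ?_, ?_⟩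
    · rw [← φ.indMatchNum_eq, completeCorona.indMatchNum_eq]
    · rw [← φ.minMatchNum_eq, completeCorona.minMatchNum_eq]
    · rw [← φ.matchNum_eq, completeCorona.matchNum_eq, hW]
    · rw [← φ.ncard_edgeSet_eq, completeCorona.ncard_edgeSet, hW, Nat.sub_add_cancel (by omega)]
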